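/- arXiv:2406.17344 — 2 statements merged into one kernel-verified Lean document; each statement's English description precedes it below -/
import Mathlib

section
/- Let b be a weighted graph over V, U ⊆ V, π = π_U^b, and x, y ∈ V with x ≠ y and x ⇝ y (π(x,y) > 0). Then exactly one of the following holds: (i) y ⇝ x and y ∈ U; (ii) y ∈ V\U (y is absorbing); (iii) y ∈ U, b(x) ≺≺ b(y), and x, y lie in different strongly connected components. -/
open Classical
open scoped ENNReal

namespace NAG

/-- The real part of an at most finite element of an ordered field:
the supremum of the rationals below it. -/
noncomputable def rp {K : Type*} [Field K] [LinearOrder K] [IsStrictOrderedRing K] (k : K) : ℝ :=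
  sSup {r : ℝ | ∃ q : ℚ, r = (q : ℝ) ∧ (q : K) ≤ k}

/-- `k₁ ≃ k₂` : the quotient is bounded above and below by positive rationals. -/
def Comparable {K : Type*} [Field K] [LinearOrder K] [IsStrictOrderedRing K] (k₁ k₂ : K) : Prop :=
  ∃ c₁ c₂ : ℚ, 0 < c₁ ∧ 0 < c₂ ∧ (c₁ : K) < k₁ / k₂ ∧ k₁ / k₂ < (c₂ : K)

/-- `k₁ ≺≺ k₂` : the quotient is smaller than every positive rational. -/
def MuchLT {K : Type*} [Field K] [LinearOrder K] [IsStrictOrderedRing K] (k₁ k₂ : K) : Prop :=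
  ∀ c : ℚ, 0 < c → k₁ / k₂ < (c : K)

/-- `k₁ ≾ k₂` : the quotient is bounded above by some positive rational. -/
def LessSim {K : Type*} [Field K] [LinearOrder K] [IsStrictOrderedRing K] (k₁ k₂ : K) : Prop :=
  ∃ c : ℚ, 0 < c ∧ k₁ / k₂ < (c : K)

/-- A (locally finite) weighted graph over `V` with values in an ordered field `K`. -/
structure Graph (V K : Type*) [Field K] [LinearOrder K] [IsStrictOrderedRing K] where
  w : V → V → K
  symm : ∀ x y, w x y = w y x
  nonneg : ∀ x y, 0 ≤ w x y
  loopless : ∀ x, w x x = 0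
  locFin : ∀ x, {y | w x y ≠ 0}.Finite

variable {V K : Type*} [Field K] [LinearOrder K] [IsStrictOrderedRing K]

/-- `b(x) = Σ_y b(x,y)`. -/
noncomputable def Graph.deg (G : Graph V K) (x : V) : K := ∑ᶠ y, G.w x y

def Graph.Adj (G : Graph V K) (x y : V) : Prop := 0 < G.w x y

def Graph.Connected (G : Graph V K) : Prop :=
  ∀ x y : V, ∃ (n : ℕ) (p : ℕ → V), p 0 = x ∧ p n = y ∧ ∀ i < n, G.Adj (p i) (p (i + 1))

def Graph.ConnectedOn (G : Graph V K) (S : Set V) : Prop :=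
  ∀ x ∈ S, ∀ y ∈ S, ∃ (n : ℕ) (p : ℕ → V),
    p 0 = x ∧ p n = y ∧ (∀ i ≤ n, p i ∈ S) ∧ ∀ i < n, G.Adj (p i) (p (i + 1))

/-- normalized weight `p(x,y) = b(x,y)/b(x)`. -/
noncomputable def Graph.p (G : Graph V K) (x y : V) : K := G.w x y / G.deg x

/-- The real transition matrix `π_U^b`. -/
noncomputable def Graph.pi (G : Graph V K) (U : Set V) (x y : V) : ℝ :=
  if x ∈ U then rp (G.p x y) else if x = y then 1 else 0

/-- A directed path of length `n` from `x` to `y` for a real kernel `m`. -/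
def DirPath {V : Type*} (m : V → V → ℝ) (x y : V) (n : ℕ) (p : ℕ → V) : Prop :=
  p 0 = x ∧ p n = y ∧ ∀ i < n, 0 < m (p i) (p (i + 1))

/-- `x → y` : reachability by directed paths. -/
def Reaches {V : Type*} (m : V → V → ℝ) (x y : V) : Prop :=
  x = y ∨ ∃ n p, DirPath m x y n p

/-- `x ↔ y` : mutual reachability (same strongly connected component). -/
def SameSCC {V : Type*} (m : V → V → ℝ) (x y : V) : Prop :=
  Reaches m x y ∧ Reaches m y x

/-! A step `x ⇝ y` with `x ≠ y` means `x ∈ U` and `b(x,y)` is not `≺≺ b(x)`, i.e.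
`b(x) ≾ b(x,y) ≤ b(y)`; so `b` can drop only by a bounded factor along a directed path.
If `y ∈ U` does not step back to `x`, then `b(x,y) ≺≺ b(y)`, hence `b(x) ≺≺ b(y)`, and a path
from `y` back to `x` would give the impossible `b(y) ≾ b(x)`. -/

section Orders

variable {K : Type*} [Field K] [LinearOrder K] [IsStrictOrderedRing K] {a b c : K}

lemma lessSim_self (a : K) : LessSim a a :=
  ⟨2, two_pos, (div_self_le_one a).trans_lt (by norm_num)⟩

lemma LessSim.trans (ha : 0 ≤ a) (hb : 0 < b) (hc : 0 ≤ c) (hab : LessSim a b)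
    (hbc : LessSim b c) : LessSim a c := by
  obtain ⟨s, hs, hab⟩ := hab
  obtain ⟨t, ht, hbc⟩ := hbc
  refine ⟨s * t, mul_pos hs ht, ?_⟩
  rw [← div_mul_div_cancel₀ hb.ne', Rat.cast_mul]
  exact mul_lt_mul'' hab hbc (by positivity) (by positivity)

lemma exists_rat_mul_le_of_not_muchLT (ha : 0 < a) (h : ¬ MuchLT b a) :
    ∃ q : ℚ, 0 < q ∧ (q : K) * a ≤ b := by
  simp only [MuchLT, not_forall, not_lt] at h
  obtain ⟨q, hq, hqle⟩ := h
  exact ⟨q, hq, (le_div_iff₀ ha).mp hqle⟩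

lemma lessSim_of_not_muchLT_of_le (ha : 0 < a) (h : ¬ MuchLT b a) (hbc : b ≤ c) :
    LessSim a c := by
  obtain ⟨q, hq, hqa⟩ := exists_rat_mul_le_of_not_muchLT ha h
  have hq' : (0 : K) < q := Rat.cast_pos.mpr hq
  have hc : 0 < c := by nlinarith
  refine ⟨2 / q, by positivity, ?_⟩
  rw [div_lt_iff₀ hc, Rat.cast_div, Rat.cast_ofNat, div_mul_eq_mul_div, lt_div_iff₀ hq']
  nlinarith

lemma muchLT_of_not_muchLT_of_muchLT (ha : 0 < a) (hc : 0 < c) (hba : ¬ MuchLT b a)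
    (hbc : MuchLT b c) : MuchLT a c := by
  obtain ⟨q, hq, hqa⟩ := exists_rat_mul_le_of_not_muchLT ha hba
  intro ε hε
  have hbc := hbc (ε * q) (mul_pos hε hq)
  rw [div_lt_iff₀ hc, Rat.cast_mul] at hbc
  rw [div_lt_iff₀ hc]
  have hq' : (0 : K) < q := Rat.cast_pos.mpr hq
  nlinarith

lemma MuchLT.not_lessSim (ha : 0 < a) (hb : 0 < b) (hab : MuchLT a b) : ¬ LessSim b a := by
  rintro ⟨C, hC, hba⟩
  have hab := hab C⁻¹ (inv_pos.mpr hC)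
  rw [Rat.cast_inv] at hab
  have h := mul_lt_mul'' hab hba (by positivity) (by positivity)
  rw [div_mul_div_comm, mul_comm a b, div_self (by positivity),
    inv_mul_cancel₀ (by positivity)] at h
  exact h.false

end Orders

-- Without an upper bound on `k` the `sSup` is junk (`rp k = 0` for infinite `k`).
lemma rp_pos_iff {K : Type*} [Field K] [LinearOrder K] [IsStrictOrderedRing K] {k : K} {B : ℚ}
    (hk : k ≤ B) : 0 < rp k ↔ ∃ q : ℚ, 0 < q ∧ (q : K) ≤ k := by
  have hbdd : BddAbove {r : ℝ | ∃ q : ℚ, r = (q : ℝ) ∧ (q : K) ≤ k} := by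
    refine ⟨B, ?_⟩
    rintro _ ⟨q, rfl, hq⟩
    exact_mod_cast (Rat.cast_le (K := K)).mp (hq.trans hk)
  constructor
  · intro h
    by_contra! hcon
    refine h.not_ge (Real.sSup_nonpos fun _ hr => ?_)
    obtain ⟨q, rfl, hq⟩ := hr
    by_contra! hq0
    exact (hcon q (by exact_mod_cast hq0)).not_ge hq
  · rintro ⟨q, hq, hqk⟩
    exact (Rat.cast_pos.mpr hq).trans_le (le_csSup hbdd ⟨q, rfl, hqk⟩)

lemma Reaches.reflTransGen {V : Type*} {m : V → V → ℝ} {x y : V} (h : Reaches m x y) :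
    Relation.ReflTransGen (fun a b => 0 < m a b) x y := by
  rcases h with rfl | ⟨n, p, rfl, rfl, hp⟩
  · exact .refl
  · induction n with
    | zero => exact .refl
    | succ n ih => exact (ih fun i hi => hp i (by omega)).tail (hp n n.lt_succ_self)

lemma sameSCC_of_pos_of_pos {V : Type*} {m : V → V → ℝ} {x y : V} (hxy : 0 < m x y)
    (hyx : 0 < m y x) : SameSCC m x y :=
  ⟨.inr ⟨1, fun i => if i = 0 then x else y, by simp, by simp, by simpa using hxy⟩,
    .inr ⟨1, fun i => if i = 0 then y else x, by simp, by simp, by simpa using hyx⟩⟩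

namespace Graph

variable (G : Graph V K)

lemma deg_nonneg (x : V) : 0 ≤ G.deg x :=
  finsum_nonneg (G.nonneg x)

lemma w_le_deg (x y : V) : G.w x y ≤ G.deg x :=
  single_le_finsum y (G.locFin x) (G.nonneg x)

lemma p_le_one (x y : V) : G.p x y ≤ 1 :=
  div_le_one_of_le₀ (G.w_le_deg x y) (G.deg_nonneg x)

lemma pi_pos_iff_of_ne (U : Set V) {x y : V} (hne : x ≠ y) :
    0 < G.pi U x y ↔ x ∈ U ∧ ¬ MuchLT (G.w x y) (G.deg x) := by
  by_cases hx : x ∈ U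
  · simp only [pi, hx, if_true, true_and]
    rw [rp_pos_iff (B := 1) (by simpa using G.p_le_one x y)]
    simp [MuchLT, p]
  · simp [pi, hx, hne]

lemma lessSim_deg_of_pi_pos (hdeg : ∀ x, 0 < G.deg x) (U : Set V)
    {x y : V} (h : 0 < G.pi U x y) : LessSim (G.deg x) (G.deg y) := by
  rcases eq_or_ne x y with rfl | hne
  · exact lessSim_self _
  · refine lessSim_of_not_muchLT_of_le (hdeg x) ((G.pi_pos_iff_of_ne U hne).mp h).2 ?_
    rw [G.symm]
    exact G.w_le_deg y x

lemma lessSim_deg_of_reaches (hdeg : ∀ x, 0 < G.deg x) (U : Set V)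
    {x y : V} (h : Reaches (G.pi U) x y) : LessSim (G.deg x) (G.deg y) := by
  obtain hpath := h.reflTransGen
  clear h
  induction hpath with
  | refl => exact lessSim_self _
  | tail _ hstep ih =>
    exact ih.trans (hdeg _).le (hdeg _) (hdeg _).le (G.lessSim_deg_of_pi_pos hdeg U hstep)

end Graph

theorem step_trichotomy_general {V K : Type*} [Field K] [LinearOrder K] [IsStrictOrderedRing K]
    (G : Graph V K) (hdeg : ∀ x, 0 < G.deg x)
    (U : Set V) (x y : V) (hne : x ≠ y) (hstep : 0 < G.pi U x y) :
    ((0 < G.pi U y x ∧ y ∈ U) ∧ ¬(y ∉ U) ∧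
        ¬(y ∈ U ∧ MuchLT (G.deg x) (G.deg y) ∧ ¬ SameSCC (G.pi U) x y)) ∨
    (¬(0 < G.pi U y x ∧ y ∈ U) ∧ (y ∉ U) ∧
        ¬(y ∈ U ∧ MuchLT (G.deg x) (G.deg y) ∧ ¬ SameSCC (G.pi U) x y)) ∨
    (¬(0 < G.pi U y x ∧ y ∈ U) ∧ ¬(y ∉ U) ∧
        (y ∈ U ∧ MuchLT (G.deg x) (G.deg y) ∧ ¬ SameSCC (G.pi U) x y)) := by
  by_cases hyU : y ∉ U
  · exact .inr <| .inl ⟨fun h => hyU h.2, hyU, fun h => hyU h.1⟩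
  rw [not_not] at hyU
  by_cases hback : 0 < G.pi U y x
  · exact .inl ⟨⟨hback, hyU⟩, not_not.mpr hyU,
      fun h => h.2.2 (sameSCC_of_pos_of_pos hstep hback)⟩
  have hxy_comparable : ¬ MuchLT (G.w x y) (G.deg x) := ((G.pi_pos_iff_of_ne U hne).mp hstep).2
  have hxy_small : MuchLT (G.w x y) (G.deg y) := by
    rw [G.symm]
    by_contra h
    exact hback ((G.pi_pos_iff_of_ne U hne.symm).mpr ⟨hyU, h⟩)
  have hmuch : MuchLT (G.deg x) (G.deg y) :=
    muchLT_of_not_muchLT_of_muchLT (hdeg x) (hdeg y) hxy_comparable hxy_small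
  exact .inr <| .inr ⟨fun h => hback h.1, not_not.mpr hyU, hyU, hmuch,
    fun h => hmuch.not_lessSim (hdeg x) (hdeg y) (G.lessSim_deg_of_reaches hdeg U h.2)⟩

/-- if `x ≠ y` and `x ⇝ y`, then exactly one of the following holds:
(i) `y ⇝ x` and `y ∈ U`; (ii) `y ∉ U` (y is absorbing); (iii) `y ∈ U`,
`b(x) ≺≺ b(y)` and `x, y` are in different strongly connected components. -/
theorem step_trichotomy {V K : Type*} [Field K] [LinearOrder K] [IsStrictOrderedRing K] [Countable V]
    (G : Graph V K) (hconn : G.Connected) (hdeg : ∀ x, 0 < G.deg x)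
    (U : Set V) (x y : V) (hne : x ≠ y) (hstep : 0 < G.pi U x y) :
    ((0 < G.pi U y x ∧ y ∈ U) ∧ ¬(y ∉ U) ∧
        ¬(y ∈ U ∧ MuchLT (G.deg x) (G.deg y) ∧ ¬ SameSCC (G.pi U) x y)) ∨
    (¬(0 < G.pi U y x ∧ y ∈ U) ∧ (y ∉ U) ∧
        ¬(y ∈ U ∧ MuchLT (G.deg x) (G.deg y) ∧ ¬ SameSCC (G.pi U) x y)) ∨
    (¬(0 < G.pi U y x ∧ y ∈ U) ∧ ¬(y ∉ U) ∧
        (y ∈ U ∧ MuchLT (G.deg x) (G.deg y) ∧ ¬ SameSCC (G.pi U) x y)) :=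
  step_trichotomy_general G hdeg U x y hne hstep

end NAG
end

section
/- Let b be a connected locally finite weighted graph over V with values in an ordered field and let a ∈ V be a recurrent state for the random walk π = π_V^b. Then G(a) = ∞, where G(a) = lim_{n} 1/ρ(cap_{K_n}(a)/b(a)) along any exhaustion (K_n) of V. Equivalently, if G(a) < ∞ then a is transient. -/
open Classical
open scoped ENNReal

namespace NAG

variable {V K : Type*} [Field K] [LinearOrder K] [IsStrictOrderedRing K]

/-- The Laplacian `Δf(x) = (1/b(x)) Σ_y b(x,y)(f(x) − f(y))`. -/
noncomputable def Graph.lap (G : Graph V K) (f : V → K) (x : V) : K :=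
  (∑ᶠ y, G.w x y * (f x - f y)) / G.deg x

/-- `v` solves the Dirichlet problem for the finite set `S` and `a ∈ S`. -/
def Graph.IsDirichletSol (G : Graph V K) (S : Finset V) (a : V) (v : V → K) : Prop :=
  v a = 1 ∧ (∀ x ∈ S, x ≠ a → G.lap v x = 0) ∧ ∀ x ∉ S, v x = 0

/-- `n`-step entries of a real kernel. -/
noncomputable def matpow {V : Type*} (m : V → V → ℝ) : ℕ → V → V → ℝ
  | 0 => fun x y => if x = y then 1 else 0
  | n + 1 => fun x y => ∑ᶠ z, matpow m n x z * m z y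


/-!
By the maximum principle the Dirichlet solution `v` on a finite connected `S ∋ a` takes values
in `[0, 1]`, so it is finite and its standard part `u` is a nonnegative real function with
`u(a) = 1` and `π_S u = u - ρ(Δv(a)) δ_a` (the walk `π_S` being stopped outside `S`). Iterating,
`Σ_y π_S⁽ᵏ⁾(a,y) u(y) = 1 - ρ(Δv(a)) Σ_{j<k} π_S⁽ʲ⁾(a,a) ≥ 0`. A walk from `a` needs more than
`N` steps to leave the `N`-ball around `a`, so once `S` contains that ball the first `N` return
probabilities of `π_S` and `π` agree. Along the exhaustion, `ρ(Δv(a))⁻¹` therefore eventually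
exceeds every partial sum of the divergent series `Σ_j π⁽ʲ⁾(a,a)`.
-/

open ArchimedeanClass

theorem rp_eq_stdPart {k : K} (hk : 0 ≤ mk k) : rp k = stdPart k := by
  have hlow : ∀ q : ℚ, (q : K) ≤ k → (q : ℝ) ≤ stdPart k := fun q hq => by
    simpa using stdPart_monotoneOn (mk_ratCast_nonneg q) hk hq
  obtain ⟨n, hn⟩ := exists_int_le_of_mk_nonneg hk
  refine csSup_eq_of_forall_le_of_forall_lt_exists_gt ⟨n, n, by simp, by exact_mod_cast hn⟩
    (fun _ ⟨q, hr, hq⟩ => hr ▸ hlow q hq) fun r hr => ?_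
  obtain ⟨q, hrq, hqk⟩ := exists_rat_btwn hr
  refine ⟨q, ⟨q, rfl, le_of_not_gt fun hkq => hqk.not_ge ?_⟩, hrq⟩
  simpa using stdPart_monotoneOn hk (mk_ratCast_nonneg q) hkq.le

theorem mk_nonneg_of_mem_Icc {k : K} (hk : k ∈ Set.Icc 0 1) : 0 ≤ mk k := by
  simpa using min_le_mk_of_le_of_le hk.1 hk.2

theorem mk_mul_nonneg {k₁ k₂ : K} (h₁ : 0 ≤ mk k₁) (h₂ : 0 ≤ mk k₂) : 0 ≤ mk (k₁ * k₂) :=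
  mk_mul k₁ k₂ ▸ add_nonneg h₁ h₂

theorem mk_sum_nonneg {ι : Type*} (s : Finset ι) {f : ι → K} (hf : ∀ i ∈ s, 0 ≤ mk (f i)) :
    0 ≤ mk (∑ i ∈ s, f i) :=
  Finset.sum_induction f (fun k => 0 ≤ mk k)
    (fun _ _ h₁ h₂ => (le_min h₁ h₂).trans (min_le_mk_add _ _)) (by simp) hf

theorem stdPart_sum {ι : Type*} (s : Finset ι) {f : ι → K} (hf : ∀ i ∈ s, 0 ≤ mk (f i)) :
    stdPart (∑ i ∈ s, f i) = ∑ i ∈ s, stdPart (f i) := by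
  induction s using Finset.induction_on with
  | empty => simp
  | insert i s hi ih =>
    rw [Finset.forall_mem_insert] at hf
    rw [Finset.sum_insert hi, Finset.sum_insert hi,
      stdPart_add hf.1 (mk_sum_nonneg s hf.2), ih hf.2]

namespace Graph

variable {G : Graph V K}

noncomputable def nb (G : Graph V K) (x : V) : Finset V := (G.locFin x).toFinset

theorem mem_nb {x y : V} : y ∈ G.nb x ↔ G.w x y ≠ 0 := Set.Finite.mem_toFinset _

theorem finsum_eq_sum_nb {M : Type*} [AddCommMonoid M] {x : V} {f : V → M}
    (hf : ∀ y, G.w x y = 0 → f y = 0) : ∑ᶠ y, f y = ∑ y ∈ G.nb x, f y :=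
  finsum_eq_sum_of_support_subset f fun y hy => mem_nb.2 fun h => hy (hf y h)

theorem p_mem_Icc (hdeg : ∀ x, 0 < G.deg x) (x y : V) : G.p x y ∈ Set.Icc 0 1 := by
  refine ⟨div_nonneg (G.nonneg x y) (hdeg x).le, div_le_one_of_le₀ ?_ (hdeg x).le⟩
  rw [deg, finsum_eq_sum_nb fun _ h => h]
  by_cases hy : y ∈ G.nb x
  · exact Finset.single_le_sum (fun z _ => G.nonneg x z) hy
  · rw [not_not.1 (mt mem_nb.2 hy)]
    exact Finset.sum_nonneg fun z _ => G.nonneg x z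

theorem lap_eq_sum (f : V → K) (x : V) :
    G.lap f x = ∑ y ∈ G.nb x, G.p x y * (f x - f y) := by
  rw [lap, finsum_eq_sum_nb fun y h => by rw [h, zero_mul], Finset.sum_div]
  exact Finset.sum_congr rfl fun y _ => by rw [p, div_mul_eq_mul_div]

theorem sum_p (hdeg : ∀ x, 0 < G.deg x) (x : V) : ∑ y ∈ G.nb x, G.p x y = 1 := by
  simp only [p]
  rw [← Finset.sum_div, ← finsum_eq_sum_nb fun _ h => h]
  exact div_self (hdeg x).ne'

theorem lap_eq_sub_sum (hdeg : ∀ x, 0 < G.deg x) (f : V → K) (x : V) :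
    G.lap f x = f x - ∑ y ∈ G.nb x, G.p x y * f y := by
  simp only [G.lap_eq_sum, mul_sub, Finset.sum_sub_distrib, ← Finset.sum_mul, G.sum_p hdeg,
    one_mul]

theorem lap_neg (f : V → K) (x : V) : G.lap (-f) x = -G.lap f x := by
  simp only [lap_eq_sum, Pi.neg_apply, ← Finset.sum_neg_distrib]
  exact Finset.sum_congr rfl fun _ _ => by ring

theorem eq_of_lap_eq_zero_of_forall_le (hdeg : ∀ x, 0 < G.deg x) {f : V → K} {x y : V}
    (hx : G.lap f x = 0) (hle : ∀ z, f z ≤ f x) (hxy : G.Adj x y) : f y = f x := by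
  rw [lap_eq_sum] at hx
  have hterm := (Finset.sum_eq_zero_iff_of_nonneg fun z _ =>
    mul_nonneg (G.p_mem_Icc hdeg x z).1 (sub_nonneg.2 (hle z))).1 hx y (mem_nb.2 hxy.ne')
  have hp : 0 < G.p x y := div_pos hxy (hdeg x)
  linarith [(mul_eq_zero.1 hterm).resolve_left hp.ne']

theorem eq_of_forall_le_of_lap_eq_zero (hdeg : ∀ x, 0 < G.deg x) {S : Set V} {a x₀ : V}
    {f : V → K} (hS : G.ConnectedOn S) (ha : a ∈ S) (hx₀ : x₀ ∈ S)
    (hharm : ∀ x ∈ S, x ≠ a → G.lap f x = 0) (hmax : ∀ y, f y ≤ f x₀) : f a = f x₀ := by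
  by_contra hne
  obtain ⟨n, p, hp0, hpn, hpS, hpadj⟩ := hS x₀ hx₀ a ha
  have hpath : ∀ i ≤ n, f (p i) = f x₀ := by
    intro i
    induction i with
    | zero => exact fun _ => by rw [hp0]
    | succ i ih =>
      intro hi
      have hfi := ih (by omega)
      have hpa : p i ≠ a := fun h => hne (h ▸ hfi)
      exact (eq_of_lap_eq_zero_of_forall_le hdeg (hharm _ (hpS i (by omega)) hpa)
        (fun z => (hmax z).trans_eq hfi.symm) (hpadj i hi)).trans hfi
  exact hne (hpn ▸ hpath n le_rfl)

theorem le_of_lap_eq_zero (hdeg : ∀ x, 0 < G.deg x) {S : Finset V} {a : V} {f : V → K} {c : K}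
    (hS : G.ConnectedOn ↑S) (ha : a ∈ S) (hharm : ∀ x ∈ S, x ≠ a → G.lap f x = 0)
    (hfa : f a ≤ c) (hout : ∀ x ∉ S, f x ≤ c) (x : V) : f x ≤ c := by
  obtain ⟨x₀, hx₀, hmax⟩ := S.exists_max_image f ⟨a, ha⟩
  suffices f x₀ ≤ c from if hx : x ∈ S then (hmax x hx).trans this else hout x hx
  by_contra! hc
  have hglob : ∀ y, f y ≤ f x₀ := fun y =>
    if hy : y ∈ S then hmax y hy else (hout y hy).trans hc.le
  have := eq_of_forall_le_of_lap_eq_zero hdeg hS ha hx₀ hharm hglob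
  linarith

theorem IsDirichletSol.mem_Icc (hdeg : ∀ x, 0 < G.deg x) {S : Finset V} {a : V} {v : V → K}
    (hS : G.ConnectedOn ↑S) (ha : a ∈ S) (hv : G.IsDirichletSol S a v) (x : V) :
    v x ∈ Set.Icc 0 1 := by
  obtain ⟨hva, hharm, hout⟩ := hv
  have hneg : ∀ x ∈ S, x ≠ a → G.lap (-v) x = 0 := fun x hx hxa => by
    rw [lap_neg, hharm x hx hxa, neg_zero]
  refine ⟨neg_nonpos.1 ?_,
    le_of_lap_eq_zero hdeg hS ha hharm hva.le (fun y hy => by simp [hout y hy]) x⟩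
  exact le_of_lap_eq_zero hdeg hS ha hneg (by simp [hva]) (fun y hy => by simp [hout y hy]) x

noncomputable def ball (G : Graph V K) (a : V) : ℕ → Finset V
  | 0 => {a}
  | k + 1 => (ball G a k).biUnion fun z => insert z (G.nb z)

def IsLocal (G : Graph V K) (m : V → V → ℝ) : Prop := ∀ x y, m x y ≠ 0 → y ∈ insert x (G.nb x)

theorem mem_ball_succ {a y : V} {k : ℕ} :
    y ∈ G.ball a (k + 1) ↔ ∃ z ∈ G.ball a k, y ∈ insert z (G.nb z) := by
  simp [ball]

theorem ball_mono (a : V) : Monotone (G.ball a) :=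
  monotone_nat_of_le_succ fun _ z hz => mem_ball_succ.2 ⟨z, hz, Finset.mem_insert_self z _⟩

theorem self_mem_ball (a : V) (k : ℕ) : a ∈ G.ball a k :=
  ball_mono a (Nat.zero_le k) (by simp [ball])

variable {m : V → V → ℝ} {a : V}

theorem matpow_eq_zero_of_notMem_ball (hm : G.IsLocal m) {k : ℕ} {y : V}
    (hy : y ∉ G.ball a k) : matpow m k a y = 0 := by
  induction k generalizing y with
  | zero => simpa [matpow, ball, eq_comm] using hy
  | succ k ih =>
    refine finsum_eq_zero_of_forall_eq_zero fun z => ?_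
    by_cases hz : z ∈ G.ball a k
    · rw [not_ne_iff.1 fun h => hy (mem_ball_succ.2 ⟨z, hz, hm z y h⟩), mul_zero]
    · rw [ih hz, zero_mul]

theorem finsum_mul_eq_sum_ball (hm : G.IsLocal m) {k : ℕ} {z : V} (hz : z ∈ G.ball a k)
    (f : V → ℝ) : ∑ᶠ y, m z y * f y = ∑ y ∈ G.ball a (k + 1), m z y * f y :=
  finsum_eq_sum_of_support_subset _ fun y hy =>
    mem_ball_succ.2 ⟨z, hz, hm z y (left_ne_zero_of_mul hy)⟩

theorem matpow_succ_eq_sum_ball (hm : G.IsLocal m) (k : ℕ) (y : V) :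
    matpow m (k + 1) a y = ∑ z ∈ G.ball a k, matpow m k a z * m z y :=
  finsum_eq_sum_of_support_subset _ fun z hz =>
    not_not.1 fun h => hz (by simp only [matpow_eq_zero_of_notMem_ball hm h, zero_mul])

theorem matpow_nonneg (hm : ∀ x y, 0 ≤ m x y) (k : ℕ) (x y : V) : 0 ≤ matpow m k x y := by
  induction k generalizing y with
  | zero => simp only [matpow]; positivity
  | succ k ih => exact finsum_nonneg fun z => mul_nonneg (ih z) (hm z y)

theorem matpow_congr_of_eqOn_ball {m' : V → V → ℝ} (hm : G.IsLocal m) {N : ℕ}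
    (hmm' : ∀ z ∈ G.ball a N, m z = m' z) {k : ℕ} (hk : k ≤ N) :
    matpow m k a = matpow m' k a := by
  induction k with
  | zero => rfl
  | succ k ih =>
    funext y
    refine finsum_congr fun z => ?_
    rw [← ih (by omega)]
    by_cases hz : z ∈ G.ball a k
    · rw [hmm' z (ball_mono a (by omega) hz)]
    · rw [matpow_eq_zero_of_notMem_ball hm hz, zero_mul, zero_mul]

/-- `T k = Σ_y m^k(a,y) u(y)` telescopes to `1 - c Σ_{j<k} m^j(a,a)` and stays nonnegative. -/
theorem mul_sum_matpow_le_one (hm : G.IsLocal m) (hm0 : ∀ x y, 0 ≤ m x y) {u : V → ℝ}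
    (hu : ∀ y, 0 ≤ u y) (hua : u a = 1) {c : ℝ}
    (hrow : ∀ x, ∑ᶠ y, m x y * u y = u x - if x = a then c else 0) (k : ℕ) :
    c * ∑ j ∈ Finset.range k, matpow m j a a ≤ 1 := by
  set T : ℕ → ℝ := fun k => ∑ y ∈ G.ball a k, matpow m k a y * u y
  have hstep : ∀ k, T (k + 1) = T k - c * matpow m k a a := fun k => calc
    T (k + 1) = ∑ y ∈ G.ball a (k + 1), ∑ z ∈ G.ball a k, matpow m k a z * (m z y * u y) := by
        simp only [T, matpow_succ_eq_sum_ball hm, Finset.sum_mul, mul_assoc]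
    _ = ∑ z ∈ G.ball a k, matpow m k a z * ∑ᶠ y, m z y * u y := by
        rw [Finset.sum_comm]
        refine Finset.sum_congr rfl fun z hz => ?_
        rw [finsum_mul_eq_sum_ball hm hz, Finset.mul_sum]
    _ = T k - c * matpow m k a a := by
        simp only [hrow, mul_sub, Finset.sum_sub_distrib, mul_ite, mul_zero,
          Finset.sum_ite_eq', if_pos (self_mem_ball a k), T, mul_comm c]
  have hT : ∀ k, T k = 1 - c * ∑ j ∈ Finset.range k, matpow m j a a := by
    intro k
    induction k with
    | zero => simp [T, ball, matpow, hua]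
    | succ k ih => rw [hstep, ih, Finset.sum_range_succ]; ring
  have hT0 : 0 ≤ T k := Finset.sum_nonneg fun y _ => mul_nonneg (matpow_nonneg hm0 k a y) (hu y)
  linarith [hT k]

theorem pi_of_mem (hdeg : ∀ x, 0 < G.deg x) {U : Set V} {x : V} (hx : x ∈ U) (y : V) :
    G.pi U x y = stdPart (G.p x y) := by
  rw [pi, if_pos hx, rp_eq_stdPart (mk_nonneg_of_mem_Icc (G.p_mem_Icc hdeg x y))]

theorem pi_nonneg (hdeg : ∀ x, 0 < G.deg x) (U : Set V) (x y : V) : 0 ≤ G.pi U x y := by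
  by_cases hx : x ∈ U
  · exact pi_of_mem hdeg hx y ▸ stdPart_nonneg (G.p_mem_Icc hdeg x y).1
  · unfold pi
    split_ifs <;> norm_num

theorem pi_isLocal (hdeg : ∀ x, 0 < G.deg x) (U : Set V) : G.IsLocal (G.pi U) := by
  intro x y hxy
  by_cases hx : x ∈ U
  · rw [pi_of_mem hdeg hx] at hxy
    refine Finset.mem_insert_of_mem (mem_nb.2 fun hw => hxy ?_)
    rw [p, hw, zero_div, stdPart_zero]
  · simp only [pi, if_neg hx, ne_eq, ite_eq_right_iff, one_ne_zero, imp_false, not_not] at hxy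
    exact hxy ▸ Finset.mem_insert_self x _

theorem mk_lap_nonneg (hdeg : ∀ x, 0 < G.deg x) {f : V → K}
    (hf : ∀ y, 0 ≤ ArchimedeanClass.mk (f y)) (x : V) :
    0 ≤ ArchimedeanClass.mk (G.lap f x) := by
  rw [lap_eq_sub_sum hdeg]
  exact (le_min (hf x) (mk_sum_nonneg _ fun y _ =>
    mk_mul_nonneg (mk_nonneg_of_mem_Icc (G.p_mem_Icc hdeg x y)) (hf y))).trans (min_le_mk_sub _ _)

theorem finsum_pi_mul_stdPart (hdeg : ∀ x, 0 < G.deg x) {U : Set V} {f : V → K}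
    (hf : ∀ y, 0 ≤ ArchimedeanClass.mk (f y)) {x : V} (hx : x ∈ U) :
    ∑ᶠ y, G.pi U x y * stdPart (f y) = stdPart (f x) - stdPart (G.lap f x) := by
  have hp : ∀ y, 0 ≤ ArchimedeanClass.mk (G.p x y) := fun y =>
    mk_nonneg_of_mem_Icc (G.p_mem_Icc hdeg x y)
  have hpf : ∀ y ∈ G.nb x, 0 ≤ ArchimedeanClass.mk (G.p x y * f y) := fun y _ =>
    mk_mul_nonneg (hp y) (hf y)
  calc ∑ᶠ y, G.pi U x y * stdPart (f y) = ∑ y ∈ G.nb x, stdPart (G.p x y * f y) := by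
        rw [finsum_eq_sum_nb fun y hw => by rw [pi_of_mem hdeg hx, p, hw, zero_div, stdPart_zero,
          zero_mul]]
        exact Finset.sum_congr rfl fun y _ => by rw [pi_of_mem hdeg hx, stdPart_mul (hp y) (hf y)]
    _ = stdPart (f x) - stdPart (G.lap f x) := by
        rw [← stdPart_sum _ hpf, lap_eq_sub_sum hdeg, stdPart_sub (hf x) (mk_sum_nonneg _ hpf),
          sub_sub_cancel]

/-- The paper's bound `G_S(a) ≥ Σ_n π_S⁽ⁿ⁾(a,a)`, with `G_S(a)⁻¹ = ρ(Δv(a))`. -/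
theorem IsDirichletSol.rp_lap_mul_sum_matpow_le_one (hdeg : ∀ x, 0 < G.deg x) {S : Finset V}
    {a : V} {v : V → K} (hS : G.ConnectedOn ↑S) (ha : a ∈ S) (hv : G.IsDirichletSol S a v)
    (k : ℕ) : rp (G.lap v a) * ∑ j ∈ Finset.range k, matpow (G.pi ↑S) j a a ≤ 1 := by
  have hv01 := hv.mem_Icc hdeg hS ha
  have hfin : ∀ y, 0 ≤ ArchimedeanClass.mk (v y) := fun y => mk_nonneg_of_mem_Icc (hv01 y)
  rw [rp_eq_stdPart (mk_lap_nonneg hdeg hfin a)]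
  refine mul_sum_matpow_le_one (pi_isLocal hdeg _) (pi_nonneg hdeg _)
    (fun y => stdPart_nonneg (hv01 y).1) (by simp [hv.1]) (fun x => ?_) k
  by_cases hx : x ∈ S
  · rw [finsum_pi_mul_stdPart hdeg hfin (Finset.mem_coe.2 hx)]
    split_ifs with hxa
    · rw [hxa]
    · rw [hv.2.1 x hx hxa, stdPart_zero]
  · have hxa : x ≠ a := fun h => hx (h ▸ ha)
    rw [if_neg hxa, sub_zero, finsum_eq_single _ x fun y hy => by simp [pi, hx, Ne.symm hy]]
    simp [pi, hx]

theorem IsDirichletSol.rp_lap_mul_sum_matpow_univ_le_one (hdeg : ∀ x, 0 < G.deg x)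
    {S : Finset V} {a : V} {v : V → K} (hS : G.ConnectedOn ↑S) (ha : a ∈ S)
    (hv : G.IsDirichletSol S a v) {N : ℕ} (hball : G.ball a N ⊆ S) :
    rp (G.lap v a) * ∑ j ∈ Finset.range N, matpow (G.pi Set.univ) j a a ≤ 1 := by
  have hrows : ∀ z ∈ G.ball a N, G.pi ↑S z = G.pi Set.univ z := fun z hz => funext fun y => by
    rw [pi_of_mem hdeg (Finset.mem_coe.2 (hball hz)), pi_of_mem hdeg (Set.mem_univ z)]
  have hsum : ∑ j ∈ Finset.range N, matpow (G.pi Set.univ) j a a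
      = ∑ j ∈ Finset.range N, matpow (G.pi ↑S) j a a := Finset.sum_congr rfl fun j hj => by
    rw [matpow_congr_of_eqOn_ball (pi_isLocal hdeg _) hrows (Finset.mem_range.1 hj).le]
  rw [hsum]
  exact hv.rp_lap_mul_sum_matpow_le_one hdeg hS ha N

end Graph

theorem tendsto_sum_range_atTop_of_tsum_ofReal_eq_top {f : ℕ → ℝ} (hf : ∀ n, 0 ≤ f n)
    (h : ∑' n, ENNReal.ofReal (f n) = ⊤) :
    Filter.Tendsto (fun N => ∑ j ∈ Finset.range N, f j) Filter.atTop Filter.atTop := by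
  refine (not_summable_iff_tendsto_nat_atTop_of_nonneg hf).1 fun hsum => ?_
  rw [← ENNReal.ofReal_tsum_of_nonneg hf hsum] at h
  exact ENNReal.ofReal_ne_top h

theorem recurrent_implies_G_infinite_general {V K : Type*} [Field K] [LinearOrder K] [IsStrictOrderedRing K]
    (G : Graph V K) (hdeg : ∀ x, 0 < G.deg x)
    (S : ℕ → Finset V) (hmono : ∀ n, S n ⊆ S (n + 1))
    (hconnS : ∀ n, G.ConnectedOn ↑(S n)) (hcover : ∀ x : V, ∃ n, x ∈ S n)
    (a : V) (ha : a ∈ S 0)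
    (v : ℕ → V → K) (hv : ∀ n, G.IsDirichletSol (S n) a (v n))
    (hrec : ∑' n : ℕ, ENNReal.ofReal (matpow (G.pi Set.univ) n a a) = ⊤) :
    Filter.limsup
      (fun n => (ENNReal.ofReal (rp ((G.lap (v n) a * G.deg a) / G.deg a)))⁻¹)
      Filter.atTop = ⊤ := by
  have hSmono : Monotone S := monotone_nat_of_le_succ hmono
  have hball : ∀ N, ∀ᶠ n in Filter.atTop, G.ball a N ⊆ S n := fun N =>
    (Filter.eventually_all_finset _).2 fun x _ =>
      let ⟨n₀, hx⟩ := hcover x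
      Filter.eventually_atTop.2 ⟨n₀, fun _ hn => hSmono hn hx⟩
  have hsum := tendsto_sum_range_atTop_of_tsum_ofReal_eq_top
    (Graph.matpow_nonneg (Graph.pi_nonneg hdeg _) · a a) hrec
  have haS : ∀ n, a ∈ S n := fun n => hSmono (Nat.zero_le n) ha
  refine (ENNReal.tendsto_nhds_top fun k => ?_).limsup_eq
  obtain ⟨N, hN⟩ := (hsum.eventually_gt_atTop (k : ℝ)).exists
  filter_upwards [hball N] with n hn
  have hest := (hv n).rp_lap_mul_sum_matpow_univ_le_one hdeg (hconnS n) (haS n) hn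
  rw [mul_div_cancel_right₀ _ (hdeg a).ne']
  calc (k : ℝ≥0∞) < ENNReal.ofReal (∑ j ∈ Finset.range N, matpow (G.pi Set.univ) j a a) := by
        rwa [← ENNReal.ofReal_natCast, ENNReal.ofReal_lt_ofReal_iff_of_nonneg k.cast_nonneg]
    _ ≤ (ENNReal.ofReal (rp (G.lap (v n) a)))⁻¹ := by
        rw [ENNReal.le_inv_iff_mul_le, ← ENNReal.ofReal_mul
          (Finset.sum_nonneg fun j _ => Graph.matpow_nonneg (Graph.pi_nonneg hdeg _) j a a),
          ENNReal.ofReal_le_one, mul_comm]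
        exact hest

/-- if `a` is a recurrent state for `π = π_V^b`, then
`G(a) = lim_n 1/ρ(cap_{K_n}(a)/b(a)) = ∞` along any exhaustion `(K_n)` of `V`
(equivalently, `G(a) < ∞` implies transience). -/
theorem recurrent_implies_G_infinite {V K : Type*} [Field K] [LinearOrder K] [IsStrictOrderedRing K] [Countable V]
    (G : Graph V K) (hconn : G.Connected) (hdeg : ∀ x, 0 < G.deg x)
    (S : ℕ → Finset V) (hmono : ∀ n, S n ⊆ S (n + 1))
    (hconnS : ∀ n, G.ConnectedOn ↑(S n)) (hcover : ∀ x : V, ∃ n, x ∈ S n)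
    (a : V) (ha : a ∈ S 0)
    (v : ℕ → V → K) (hv : ∀ n, G.IsDirichletSol (S n) a (v n))
    (hrec : ∑' n : ℕ, ENNReal.ofReal (matpow (G.pi Set.univ) n a a) = ⊤) :
    Filter.limsup
      (fun n => (ENNReal.ofReal (rp ((G.lap (v n) a * G.deg a) / G.deg a)))⁻¹)
      Filter.atTop = ⊤ :=
  recurrent_implies_G_infinite_general G hdeg S hmono hconnS hcover a ha v hv hrec
end NAG
end
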